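/- Let A be an n×n nonnegative matrix with all cycle weights ≤ 1 and let x be any positive vector in the max-algebraic column span of A* (i.e., x_i = max_j c_j (A*)_{ij} for some nonnegative coefficients c_j, with all x_i > 0). Then x is a Fiedler–Pták scaling of A: x_i^{-1} a_{ij} x_j ≤ 1 for all i, j. -/

import Mathlib

open scoped NNReal

/-- Max-times matrix product. -/
noncomputable def maxMul {n : ℕ} (A B : Matrix (Fin n) (Fin n) ℝ≥0) : Matrix (Fin n) (Fin n) ℝ≥0 :=
  fun i j => Finset.univ.sup fun k => A i k * B k j

/-- Max-times matrix power. -/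
noncomputable def maxPow {n : ℕ} (A : Matrix (Fin n) (Fin n) ℝ≥0) : ℕ → Matrix (Fin n) (Fin n) ℝ≥0
  | 0 => fun i j => if i = j then 1 else 0
  | (k+1) => maxMul (maxPow A k) A

/-- Max-times matrix-vector product. -/
noncomputable def maxVec {n : ℕ} (A : Matrix (Fin n) (Fin n) ℝ≥0) (x : Fin n → ℝ≥0) : Fin n → ℝ≥0 :=
  fun i => Finset.univ.sup fun j => A i j * x j

/-- Weight of the cycle visiting `c 0, c 1, ..., c m, c 0` (indices cyclic in `Fin (m+1)`). -/
noncomputable def cycleWeight {n m : ℕ} (A : Matrix (Fin n) (Fin n) ℝ≥0) (c : Fin (m+1) → Fin n) : ℝ≥0 :=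
  ∏ i : Fin (m+1), A (c i) (c (i + 1))

/-- Kleene star `I ⊕ A ⊕ ... ⊕ A^{n-1}`. -/
noncomputable def kleeneStar {n : ℕ} (A : Matrix (Fin n) (Fin n) ℝ≥0) : Matrix (Fin n) (Fin n) ℝ≥0 :=
  fun i j => (Finset.range n).sup fun k => maxPow A k i j

/-- Weight of the walk `p 0, p 1, ..., p m`. -/
noncomputable def walkW {n : ℕ} (A : Matrix (Fin n) (Fin n) ℝ≥0) (p : ℕ → Fin n) (m : ℕ) : ℝ≥0 :=
  ∏ u ∈ Finset.range m, A (p u) (p (u+1))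

lemma walkW_le_maxPow {n : ℕ} (A : Matrix (Fin n) (Fin n) ℝ≥0) (p : ℕ → Fin n) :
    ∀ m, walkW A p m ≤ maxPow A m (p 0) (p m) := by
  intro m
  induction m with
  | zero => simp [walkW, maxPow]
  | succ m ih =>
    have h1 : walkW A p (m+1) = walkW A p m * A (p m) (p (m+1)) := by
      simp [walkW, Finset.prod_range_succ]
    rw [h1]
    calc walkW A p m * A (p m) (p (m+1))
        ≤ maxPow A m (p 0) (p m) * A (p m) (p (m+1)) := mul_le_mul_left ih _
      _ ≤ maxPow A (m+1) (p 0) (p (m+1)) := by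
          show _ ≤ maxMul (maxPow A m) A (p 0) (p (m+1))
          exact Finset.le_sup (f := fun k => maxPow A m (p 0) k * A k (p (m+1)))
            (Finset.mem_univ (p m))

lemma maxPow_le_walkW {n : ℕ} (A : Matrix (Fin n) (Fin n) ℝ≥0) (j : Fin n) :
    ∀ (m : ℕ) (k : Fin n), maxPow A m j k = 0 ∨
      ∃ p : ℕ → Fin n, p 0 = j ∧ p m = k ∧ maxPow A m j k ≤ walkW A p m := by
  intro m
  induction m with
  | zero =>
    intro k
    by_cases h : j = k
    · subst h
      exact Or.inr ⟨fun _ => j, rfl, rfl, by simp [maxPow, walkW]⟩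
    · left; simp [maxPow, h]
  | succ m ih =>
    intro k
    have hne : (Finset.univ : Finset (Fin n)).Nonempty := ⟨j, Finset.mem_univ j⟩
    obtain ⟨l, -, hl⟩ := Finset.exists_mem_eq_sup Finset.univ hne
      (fun l => maxPow A m j l * A l k)
    have hsup : maxPow A (m+1) j k = maxPow A m j l * A l k := hl
    rcases ih l with h0 | ⟨p, hp0, hpm, hle⟩
    · left; rw [hsup, h0, zero_mul]
    · right
      refine ⟨fun u => if u ≤ m then p u else k, by simp [hp0], by simp, ?_⟩
      have hW : walkW A (fun u => if u ≤ m then p u else k) (m+1)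
          = walkW A p m * A (p m) k := by
        rw [walkW, Finset.prod_range_succ, walkW]
        congr 1
        · apply Finset.prod_congr rfl
          intro u hu
          have hu' := Finset.mem_range.mp hu
          simp [Nat.le_of_lt hu', Nat.succ_le_of_lt hu']
        · simp
      rw [hW, hsup, hpm]
      exact mul_le_mul_left hle _

lemma mul_maxPow_le {n : ℕ} (A : Matrix (Fin n) (Fin n) ℝ≥0) (i j k : Fin n) (m : ℕ) :
    A i j * maxPow A m j k ≤ maxPow A (m+1) i k := by
  rcases maxPow_le_walkW A j m k with h0 | ⟨p, hp0, hpm, hle⟩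
  · rw [h0, mul_zero]; exact zero_le
  · set p' : ℕ → Fin n := fun u => if u = 0 then i else p (u-1) with hp'
    have hrest : (∏ u ∈ Finset.range m, A (p' (u+1)) (p' (u+1+1))) = walkW A p m := by
      rw [walkW]
      exact Finset.prod_congr rfl fun u hu => by simp [hp']
    have h0 : A (p' 0) (p' (0+1)) = A i j := by simp [hp', hp0]
    have hW : walkW A p' (m+1) = A i j * walkW A p m := by
      rw [walkW, Finset.prod_range_succ', hrest, h0, mul_comm]
    calc A i j * maxPow A m j k ≤ A i j * walkW A p m := mul_le_mul_right hle _
      _ = walkW A p' (m+1) := hW.symm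
      _ ≤ maxPow A (m+1) (p' 0) (p' (m+1)) := walkW_le_maxPow A p' (m+1)
      _ = maxPow A (m+1) i k := by simp [hp', hpm]

lemma walkW_le_kleene {n : ℕ} (A : Matrix (Fin n) (Fin n) ℝ≥0)
    (hcyc : ∀ (m : ℕ) (c : Fin (m+1) → Fin n), cycleWeight A c ≤ 1)
    (hn : 0 < n) (p : ℕ → Fin n) : walkW A p n ≤ kleeneStar A (p 0) (p n) := by
  -- pigeonhole: two equal vertices among p 0, ..., p n
  obtain ⟨a, b, hab, heq⟩ := Fintype.exists_ne_map_eq_of_card_lt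
    (fun v : Fin (n+1) => p v.val) (by simp)
  -- normalize to t < s
  obtain ⟨t, s, hts, hsn, hpts⟩ : ∃ t s : ℕ, t < s ∧ s ≤ n ∧ p t = p s := by
    rcases lt_or_gt_of_ne hab with h | h
    · exact ⟨a.val, b.val, h, Nat.lt_succ_iff.mp b.isLt, heq⟩
    · exact ⟨b.val, a.val, h, Nat.lt_succ_iff.mp a.isLt, heq.symm⟩
  set d := s - t with hd
  have hd1 : 1 ≤ d := by omega
  have hsd : s = t + d := by omega
  set q : ℕ → Fin n := fun u => if u < t then p u else p (u + d) with hq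
  set f : ℕ → ℝ≥0 := fun u => A (p u) (p (u+1)) with hf
  -- the cycle weight
  have hcycle : (∏ u ∈ Finset.Ico t s, f u) ≤ 1 := by
    obtain ⟨m, hm⟩ : ∃ m, d = m + 1 := ⟨d - 1, by omega⟩
    set cc : Fin (m+1) → Fin n := fun v => p (t + v.val) with hcc
    have e1 : ∀ v : Fin m, A (cc v.castSucc) (cc (v.castSucc + 1)) = f (t + v.val) := by
      intro v
      have h1 : ((v.castSucc + 1 : Fin (m+1)) : ℕ) = v.val + 1 := by
        simp [Fin.add_def, Nat.mod_eq_of_lt (by omega : v.val + 1 < m + 1)]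
      simp only [hcc, hf, Fin.coe_castSucc, h1, Nat.add_assoc]
    have e2 : A (cc (Fin.last m)) (cc (Fin.last m + 1)) = f (t + m) := by
      have h2 : ((Fin.last m + 1 : Fin (m+1)) : ℕ) = 0 := by
        simp [Fin.add_def, Fin.last]
      simp only [hcc, hf, Fin.val_last, h2]
      have h3 : p (t + 0) = p (t + m + 1) := by
        rw [Nat.add_zero, hpts]
        congr 1
        omega
      rw [h3]
    calc (∏ u ∈ Finset.Ico t s, f u) = ∏ u ∈ Finset.range (m+1), f (t+u) := by
          rw [Finset.prod_Ico_eq_prod_range, show s - t = m + 1 by omega]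
      _ = (∏ u ∈ Finset.range m, f (t+u)) * f (t+m) := Finset.prod_range_succ _ _
      _ = cycleWeight A cc := by
          rw [cycleWeight, Fin.prod_univ_castSucc, e2]
          congr 1
          rw [← Fin.prod_univ_eq_prod_range (fun u => f (t+u)) m]
          exact Finset.prod_congr rfl fun v _ => (e1 v).symm
      _ ≤ 1 := hcyc m cc
  -- decompose walk weights
  have hq0 : q 0 = p 0 := by
    rcases Nat.eq_zero_or_pos t with h | h
    · simp only [hq]
      rw [if_neg (by omega)]
      rw [show 0 + d = s by omega, ← hpts, h]
    · simp [hq, h]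
  have hqe : q (n - d) = p n := by
    simp only [hq]
    rw [if_neg (by omega), show n - d + d = n by omega]
  have hsplit : walkW A p n = walkW A q (n - d) * (∏ u ∈ Finset.Ico t s, f u) := by
    have hP : walkW A p n = ((∏ u ∈ Finset.Ico 0 t, f u) * (∏ u ∈ Finset.Ico t s, f u))
        * (∏ u ∈ Finset.Ico s n, f u) := by
      rw [Finset.prod_Ico_consecutive f (by omega) (by omega : t ≤ s),
        Finset.prod_Ico_consecutive f (by omega) (by omega : s ≤ n)]
      rw [walkW, Finset.range_eq_Ico]
    have hQ : walkW A q (n - d) = (∏ u ∈ Finset.Ico 0 t, f u) * (∏ u ∈ Finset.Ico s n, f u) := by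
      have hg : walkW A q (n - d) = (∏ u ∈ Finset.Ico 0 t, A (q u) (q (u+1)))
          * (∏ u ∈ Finset.Ico t (n - d), A (q u) (q (u+1))) := by
        rw [Finset.prod_Ico_consecutive _ (by omega) (by omega : t ≤ n - d)]
        rw [walkW, Finset.range_eq_Ico]
      rw [hg]
      congr 1
      · apply Finset.prod_congr rfl
        intro u hu
        have hu' : u < t := (Finset.mem_Ico.mp hu).2
        have hqu : q u = p u := by simp [hq, hu']
        have hqu1 : q (u+1) = p (u+1) := by
          rcases Nat.lt_or_ge (u+1) t with h | h
          · simp [hq, h]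
          · have : u + 1 = t := by omega
            simp only [hq]
            rw [if_neg (by omega), this, show t + d = s by omega, ← hpts]
        rw [hqu, hqu1]
      · rw [Finset.prod_Ico_eq_prod_range, Finset.prod_Ico_eq_prod_range]
        have hnn : n - d - t = n - s := by omega
        rw [hnn]
        apply Finset.prod_congr rfl
        intro u hu
        have hu' : u < n - s := Finset.mem_range.mp hu
        have h1 : q (t + u) = p (s + u) := by
          simp only [hq]
          rw [if_neg (by omega)]
          congr 1; omega
        have h2 : q (t + u + 1) = p (s + u + 1) := by
          simp only [hq]
          rw [if_neg (by omega)]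
          congr 1; omega
        simp only [hf, h1, h2]
    rw [hP, hQ]; ring
  calc walkW A p n = walkW A q (n - d) * (∏ u ∈ Finset.Ico t s, f u) := hsplit
    _ ≤ walkW A q (n - d) * 1 := mul_le_mul_right hcycle _
    _ = walkW A q (n - d) := mul_one _
    _ ≤ maxPow A (n - d) (q 0) (q (n - d)) := walkW_le_maxPow A q _
    _ = maxPow A (n - d) (p 0) (p n) := by rw [hq0, hqe]
    _ ≤ kleeneStar A (p 0) (p n) := by
        exact Finset.le_sup (f := fun k => maxPow A k (p 0) (p n))
          (Finset.mem_range.mpr (by omega))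

lemma maxPow_le_kleene {n : ℕ} (A : Matrix (Fin n) (Fin n) ℝ≥0)
    (hcyc : ∀ (m : ℕ) (c : Fin (m+1) → Fin n), cycleWeight A c ≤ 1)
    {m : ℕ} (hm : m ≤ n) (i k : Fin n) : maxPow A m i k ≤ kleeneStar A i k := by
  have hn : 0 < n := i.pos
  rcases Nat.lt_or_ge m n with h | h
  · exact Finset.le_sup (f := fun m => maxPow A m i k) (Finset.mem_range.mpr h)
  · have hmn : m = n := le_antisymm hm h
    subst hmn
    rcases maxPow_le_walkW A i m k with h0 | ⟨p, hp0, hpm, hle⟩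
    · rw [h0]; exact zero_le
    · calc maxPow A m i k ≤ walkW A p m := hle
        _ ≤ kleeneStar A (p 0) (p m) := walkW_le_kleene A hcyc hn p
        _ = kleeneStar A i k := by rw [hp0, hpm]

/-- Any positive vector in the max-algebraic column span of `A*` is a Fiedler–Pták scaling. -/
theorem span_kleeneStar_is_fp_scaling {n : ℕ} (A : Matrix (Fin n) (Fin n) ℝ≥0)
    (hcyc : ∀ (m : ℕ) (c : Fin (m+1) → Fin n), cycleWeight A c ≤ 1)
    (x : Fin n → ℝ≥0) (c : Fin n → ℝ≥0)
    (hx : ∀ i, x i = Finset.univ.sup fun j => c j * kleeneStar A i j)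
    (hpos : ∀ i, 0 < x i) :
    ∀ i j, (x i)⁻¹ * A i j * x j ≤ 1 := by
  intro i j
  have hkey : A i j * x j ≤ x i := by
    rw [hx j, NNReal.mul_finset_sup]
    apply Finset.sup_le
    intro k _
    have h1 : A i j * kleeneStar A j k ≤ kleeneStar A i k := by
      rw [kleeneStar, NNReal.mul_finset_sup]
      apply Finset.sup_le
      intro m hm
      have hm' : m < n := Finset.mem_range.mp hm
      calc A i j * maxPow A m j k ≤ maxPow A (m+1) i k := mul_maxPow_le A i j k m
        _ ≤ kleeneStar A i k := maxPow_le_kleene A hcyc (by omega) i k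
    calc A i j * (c k * kleeneStar A j k) = c k * (A i j * kleeneStar A j k) := by ring
      _ ≤ c k * kleeneStar A i k := mul_le_mul_right h1 _
      _ ≤ x i := by rw [hx i]; exact Finset.le_sup (f := fun j => c j * kleeneStar A i j) (Finset.mem_univ k)
  calc (x i)⁻¹ * A i j * x j = (x i)⁻¹ * (A i j * x j) := by ring
    _ ≤ (x i)⁻¹ * x i := mul_le_mul_right hkey _
    _ = 1 := inv_mul_cancel₀ (hpos i).ne'
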